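/- Let Ā = [ā1, …, ā_d] ∈ R^{n×d} have unit-norm columns with pairwise inner products r̄_{ji} = āⱼᵀāᵢ for j ≠ i, and let V = [v1, …, v_d] be the Gram–Schmidt orthonormalization of Ā. Writing V − Ā = Ā Ū with Ū = (ū_{ji}) upper triangular, the diagonal entries satisfy ū_{ii} = O(‖R̄‖_F²) and the strictly upper entries satisfy ū_{ji} = −r̄_{ji} + o(‖R̄‖_F) as R̄ = ĀᵀĀ − I → 0; more precisely, lim sup_{R̄→0} ū_{ii}/‖R̄‖_F² ≤ 1/4 and lim_{R̄→0} (ū_{ji} + r̄_{ji})/‖R̄‖_F = 0 for j < i. -/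

import Mathlib

/-!
Write `u = gramSchmidt a i`, `x = a i - u` and `ρ = ‖R̄‖_F`. The vector `x` is a combination
`∑_{m<i} c_m a_m` orthogonal to `u`, so `‖x‖² = ⟪x, a i⟫ = ∑_{m<i} c_m r̄_{mi}`, while
near-orthonormality of the columns gives `(1 - ρ) ∑ c_m² ≤ ‖x‖²`. Hence
`‖x‖² ≤ ∑_{m<i} r̄_{mi}² / (1 - ρ) ≤ ρ² / (2 (1 - ρ))`, the factor `1/2` coming from the symmetry
of `R̄`. Since `v i = u / ‖u‖` is orthogonal to every `a_l` with `l < i`, pairing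
`v i = a i + ∑_l ū_{li} a_l` with `v i` gives `(1 + ū_{ii}) ‖u‖ = 1`, where `‖u‖² = 1 - ‖x‖²`, so
`ū_{ii} ≈ ‖x‖² / 2 ≤ ρ² / 4`; pairing it with `a j`, `j < i`, gives
`ū_{ji} + r̄_{ji} = -∑_l r̄_{jl} ū_{li}`, which is `O(ρ²)` because `‖v i - a i‖² = 2 (1 - ‖u‖)`
forces the column `ū_{·i}` to have norm `O(ρ)`.
-/

open MeasureTheory Filter Matrix

noncomputable def frob {m n : Type*} [Fintype m] [Fintype n] (M : Matrix m n ℝ) : ℝ :=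
  Real.sqrt (∑ i, ∑ j, (M i j)^2)

/-- The Gram–Schmidt orthonormalization of a family of vectors (Mathlib's
`gramSchmidtNormed`, with instances spelled out). -/
noncomputable def gsNormed {n d : ℕ} (abar : Fin d → EuclideanSpace ℝ (Fin n)) :
    Fin d → EuclideanSpace ℝ (Fin n) :=
  @InnerProductSpace.gramSchmidtNormed ℝ _ _ _ _ (Fin d) _ _ (inferInstanceAs (WellFoundedLT (Fin d))) abar

open Finset InnerProductSpace
open scoped RealInnerProductSpace

section Frobenius

variable {m n : Type*} [Fintype m] [Fintype n]

lemma frob_nonneg (M : Matrix m n ℝ) : 0 ≤ frob M :=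
  Real.sqrt_nonneg _

lemma frob_sq (M : Matrix m n ℝ) : frob M ^ 2 = ∑ i, ∑ j, M i j ^ 2 :=
  Real.sq_sqrt (by positivity)

lemma sum_sum_sq_le_frob_sq (M : Matrix m n ℝ) (s : Finset m) (t : Finset n) :
    ∑ i ∈ s, ∑ j ∈ t, M i j ^ 2 ≤ frob M ^ 2 := by
  rw [frob_sq]
  calc ∑ i ∈ s, ∑ j ∈ t, M i j ^ 2 ≤ ∑ i ∈ s, ∑ j, M i j ^ 2 :=
        sum_le_sum fun i _ => sum_le_sum_of_subset_of_nonneg (subset_univ t)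
          fun _ _ _ => sq_nonneg _
    _ ≤ ∑ i, ∑ j, M i j ^ 2 :=
        sum_le_sum_of_subset_of_nonneg (subset_univ s) fun _ _ _ => by positivity

lemma sq_sum_mul_le_frob_sq_mul (M : Matrix m n ℝ) (k : m) (y : n → ℝ) :
    (∑ l, M k l * y l) ^ 2 ≤ frob M ^ 2 * ∑ l, y l ^ 2 := by
  refine (sum_mul_sq_le_sq_mul_sq _ _ _).trans (mul_le_mul_of_nonneg_right ?_ (by positivity))
  simpa using sum_sum_sq_le_frob_sq M {k} univ

lemma abs_sum_sum_mul_le_frob_mul (M : Matrix m m ℝ) (s : Finset m) (c : m → ℝ) :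
    |∑ k ∈ s, ∑ l ∈ s, c k * c l * M k l| ≤ frob M * ∑ k ∈ s, c k ^ 2 := by
  refine abs_le_of_sq_le_sq ?_ (mul_nonneg (frob_nonneg M) (by positivity))
  calc (∑ k ∈ s, ∑ l ∈ s, c k * c l * M k l) ^ 2
      = (∑ k ∈ s, c k * ∑ l ∈ s, M k l * c l) ^ 2 := by
        simp only [mul_sum]; congr 1; refine sum_congr rfl fun k _ => sum_congr rfl fun l _ => ?_
        ring
    _ ≤ (∑ k ∈ s, c k ^ 2) * ∑ k ∈ s, (∑ l ∈ s, M k l * c l) ^ 2 :=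
        sum_mul_sq_le_sq_mul_sq _ _ _
    _ ≤ (∑ k ∈ s, c k ^ 2) * ∑ k ∈ s, (∑ l ∈ s, M k l ^ 2) * ∑ l ∈ s, c l ^ 2 := by
        gcongr with k; exact sum_mul_sq_le_sq_mul_sq _ _ _
    _ ≤ (frob M * ∑ k ∈ s, c k ^ 2) ^ 2 := by
        rw [← sum_mul, mul_pow]
        nlinarith [sum_sum_sq_le_frob_sq M s s, sq_nonneg (∑ k ∈ s, c k ^ 2)]

lemma sum_Iio_sq_le_frob_sq_div_two [LinearOrder m] [LocallyFiniteOrderBot m]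
    (M : Matrix m m ℝ) (hM : M.IsSymm) (i : m) :
    ∑ k ∈ Iio i, M k i ^ 2 ≤ frob M ^ 2 / 2 := by
  have hcol : ∑ k ∈ Iio i, M k i ^ 2 = ∑ l ∈ Iio i, M i l ^ 2 :=
    sum_congr rfl fun k _ => by rw [← hM.apply i k]
  have hsplit := sum_sum_sq_le_frob_sq M (insert i (Iio i)) univ
  rw [sum_insert (by simp)] at hsplit
  have hrow : ∑ l ∈ Iio i, M i l ^ 2 ≤ ∑ l, M i l ^ 2 :=
    sum_le_sum_of_subset_of_nonneg (subset_univ _) fun _ _ _ => sq_nonneg _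
  have hcols : ∑ k ∈ Iio i, M k i ^ 2 ≤ ∑ k ∈ Iio i, ∑ l, M k l ^ 2 :=
    sum_le_sum fun k _ => single_le_sum (f := fun l => M k l ^ 2) (fun _ _ => sq_nonneg _)
      (mem_univ i)
  linarith

end Frobenius

section GramDefect

variable {ι E : Type*} [NormedAddCommGroup E] [InnerProductSpace ℝ E] [DecidableEq ι]

def gramDefect (a : ι → E) : Matrix ι ι ℝ := fun j i => ⟪a j, a i⟫ - if j = i then 1 else 0

variable {a : ι → E}

lemma inner_eq_gramDefect_add (j i : ι) :
    ⟪a j, a i⟫ = gramDefect a j i + if j = i then 1 else 0 := by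
  simp [gramDefect]

lemma inner_eq_gramDefect_of_ne {j i : ι} (h : j ≠ i) : ⟪a j, a i⟫ = gramDefect a j i := by
  simp [gramDefect, h]

lemma gramDefect_isSymm : (gramDefect a).IsSymm := by
  ext j i
  simp [gramDefect, real_inner_comm, eq_comm]

lemma one_sub_frob_gramDefect_mul_sum_sq_le [Fintype ι] (s : Finset ι) (c : ι → ℝ) :
    (1 - frob (gramDefect a)) * ∑ k ∈ s, c k ^ 2 ≤ ‖∑ k ∈ s, c k • a k‖ ^ 2 := by
  have hexp : ‖∑ k ∈ s, c k • a k‖ ^ 2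
      = ∑ k ∈ s, ∑ l ∈ s, c k * c l * gramDefect a k l + ∑ k ∈ s, c k ^ 2 := by
    rw [← real_inner_self_eq_norm_sq, sum_inner]
    simp only [inner_sum, inner_smul_left, inner_smul_right, inner_eq_gramDefect_add,
      RCLike.conj_to_real, mul_add, mul_ite, mul_one, mul_zero, sum_add_distrib,
      sum_ite_eq, ← mul_assoc]
    congr 1
    · exact sum_congr rfl fun k _ => sum_congr rfl fun l _ => by ring
    · exact sum_congr rfl fun k hk => by rw [if_pos hk, sq]
  linarith [(abs_le.1 (abs_sum_sum_mul_le_frob_mul (gramDefect a) s c)).1]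

end GramDefect

section GramSchmidt

variable {ι E : Type*} [NormedAddCommGroup E] [InnerProductSpace ℝ E]
  [LinearOrder ι] [LocallyFiniteOrderBot ι] [WellFoundedLT ι] {a : ι → E}

lemma exists_sum_Iio_eq_sub_gramSchmidt (a : ι → E) (i : ι) :
    ∃ c : ι → ℝ, ∑ m ∈ Iio i, c m • a m = a i - gramSchmidt ℝ a i := by
  refine (Submodule.mem_span_image_finset_iff_exists_fun' ℝ).1 ?_
  rw [coe_Iio, ← span_gramSchmidt_Iio]
  nth_rw 1 [gramSchmidt_def'' ℝ a i]
  rw [add_sub_cancel_left]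
  exact Submodule.sum_mem _ fun m hm =>
    Submodule.smul_mem _ _ (Submodule.subset_span ⟨m, mem_Iio.1 hm, rfl⟩)

lemma inner_gramSchmidt_sub_gramSchmidt_eq_zero (i : ι) :
    ⟪gramSchmidt ℝ a i, a i - gramSchmidt ℝ a i⟫ = 0 := by
  obtain ⟨c, hc⟩ := exists_sum_Iio_eq_sub_gramSchmidt a i
  rw [← hc, inner_sum]
  exact sum_eq_zero fun m hm => by
    rw [inner_smul_right, gramSchmidt_inv_triangular ℝ a (mem_Iio.1 hm), mul_zero]

lemma norm_sq_gramSchmidt_add_norm_sq_sub (i : ι) :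
    ‖gramSchmidt ℝ a i‖ ^ 2 + ‖a i - gramSchmidt ℝ a i‖ ^ 2 = ‖a i‖ ^ 2 := by
  have h := norm_add_sq_eq_norm_sq_add_norm_sq_real
    (inner_gramSchmidt_sub_gramSchmidt_eq_zero (a := a) i)
  rw [add_sub_cancel] at h
  simp only [sq]
  exact h.symm

lemma norm_gramSchmidt_le (i : ι) : ‖gramSchmidt ℝ a i‖ ≤ ‖a i‖ :=
  (sq_le_sq₀ (norm_nonneg _) (norm_nonneg _)).1 <| by
    nlinarith [norm_sq_gramSchmidt_add_norm_sq_sub (a := a) i, sq_nonneg ‖a i - gramSchmidt ℝ a i‖]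

lemma inner_gramSchmidt_eq_norm_sq (i : ι) :
    ⟪a i, gramSchmidt ℝ a i⟫ = ‖gramSchmidt ℝ a i‖ ^ 2 := by
  have h := inner_gramSchmidt_sub_gramSchmidt_eq_zero (a := a) i
  rw [inner_sub_right, real_inner_self_eq_norm_sq, real_inner_comm, sub_eq_zero] at h
  exact h

lemma inner_gramSchmidtNormed_eq_zero_of_lt {j i : ι} (h : j < i) :
    ⟪a j, gramSchmidtNormed ℝ a i⟫ = 0 := by
  rw [gramSchmidtNormed, inner_smul_right, real_inner_comm, gramSchmidt_inv_triangular ℝ a h,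
    mul_zero]

lemma inner_gramSchmidtNormed_eq_norm (i : ι) :
    ⟪a i, gramSchmidtNormed ℝ a i⟫ = ‖gramSchmidt ℝ a i‖ := by
  rw [gramSchmidtNormed, inner_smul_right, inner_gramSchmidt_eq_norm_sq, sq, ← div_eq_inv_mul]
  exact mul_self_div_self _

lemma norm_gramSchmidtNormed_eq_one {i : ι} (h : gramSchmidt ℝ a i ≠ 0) :
    ‖gramSchmidtNormed ℝ a i‖ = 1 :=
  norm_smul_inv_norm h

end GramSchmidt

section Perturbation

variable {ι E : Type*} [NormedAddCommGroup E] [InnerProductSpace ℝ E]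
  [LinearOrder ι] [Fintype ι] [LocallyFiniteOrderBot ι] [WellFoundedLT ι] [DecidableEq ι]
  {a : ι → E}

lemma norm_sq_sub_gramSchmidt_mul_le (hρ : frob (gramDefect a) ≤ 1) (i : ι) :
    ‖a i - gramSchmidt ℝ a i‖ ^ 2 * (1 - frob (gramDefect a)) ≤
      ∑ m ∈ Iio i, gramDefect a m i ^ 2 := by
  obtain ⟨c, hc⟩ := exists_sum_Iio_eq_sub_gramSchmidt a i
  set x := a i - gramSchmidt ℝ a i
  set r2 := ∑ m ∈ Iio i, gramDefect a m i ^ 2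
  have hx_self : ⟪x, a i⟫ = ‖x‖ ^ 2 := by
    have h := inner_gramSchmidt_sub_gramSchmidt_eq_zero (a := a) i
    rw [real_inner_comm] at h
    rw [← real_inner_self_eq_norm_sq, inner_sub_right x (a i), h, sub_zero]
  have hx_coeff : ⟪x, a i⟫ = ∑ m ∈ Iio i, c m * gramDefect a m i := by
    rw [← hc, sum_inner]
    exact sum_congr rfl fun m hm => by
      rw [real_inner_smul_left, inner_eq_gramDefect_of_ne (mem_Iio.1 hm).ne]
  have hcs : ⟪x, a i⟫ ^ 2 ≤ (∑ m ∈ Iio i, c m ^ 2) * r2 := by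
    rw [hx_coeff]; exact sum_mul_sq_le_sq_mul_sq _ _ _
  have hnorm := one_sub_frob_gramDefect_mul_sum_sq_le (a := a) (Iio i) c
  rw [hc] at hnorm
  have hr2 : 0 ≤ r2 := by positivity
  have hx_quartic : ‖x‖ ^ 2 * (‖x‖ ^ 2 * (1 - frob (gramDefect a))) ≤ ‖x‖ ^ 2 * r2 := by
    rw [← hx_self]
    nlinarith [mul_le_mul_of_nonneg_right hnorm hr2]
  rcases (sq_nonneg ‖x‖).eq_or_lt with h0 | hpos
  · rw [← h0, zero_mul]; exact hr2
  · exact le_of_mul_le_mul_left hx_quartic hpos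

lemma one_sub_norm_sq_gramSchmidt_mul_le (hunit : ∀ i, ‖a i‖ = 1)
    (hρ : frob (gramDefect a) ≤ 1) (i : ι) :
    (1 - ‖gramSchmidt ℝ a i‖ ^ 2) * (2 * (1 - frob (gramDefect a))) ≤
      frob (gramDefect a) ^ 2 := by
  have hpyth := norm_sq_gramSchmidt_add_norm_sq_sub (a := a) i
  rw [hunit i, one_pow] at hpyth
  have h := norm_sq_sub_gramSchmidt_mul_le hρ i
  have hhalf := sum_Iio_sq_le_frob_sq_div_two _ (gramDefect_isSymm (a := a)) i
  nlinarith

lemma gramSchmidt_ne_zero_of_frob_lt (hunit : ∀ i, ‖a i‖ = 1)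
    (hρ : frob (gramDefect a) < 1 / 2) (i : ι) : gramSchmidt ℝ a i ≠ 0 := by
  intro h0
  have h := one_sub_norm_sq_gramSchmidt_mul_le hunit (hρ.le.trans (by norm_num)) i
  rw [h0, norm_zero] at h
  nlinarith [frob_nonneg (gramDefect a)]

variable {U : Matrix ι ι ℝ} {i : ι}

lemma one_add_coeff_mul_norm_gramSchmidt (hu : gramSchmidt ℝ a i ≠ 0)
    (hU : ∀ l, i < l → U l i = 0) (hv : gramSchmidtNormed ℝ a i = a i + ∑ l, U l i • a l) :
    (1 + U i i) * ‖gramSchmidt ℝ a i‖ = 1 := by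
  have hterm : ∀ l, U l i * ⟪a l, gramSchmidtNormed ℝ a i⟫ =
      if l = i then U i i * ‖gramSchmidt ℝ a i‖ else 0 := by
    intro l
    rcases lt_trichotomy l i with hl | rfl | hl
    · rw [inner_gramSchmidtNormed_eq_zero_of_lt hl, mul_zero, if_neg hl.ne]
    · rw [inner_gramSchmidtNormed_eq_norm, if_pos rfl]
    · rw [hU l hl, zero_mul, if_neg hl.ne']
  have h := real_inner_self_eq_norm_sq (gramSchmidtNormed ℝ a i)
  rw [norm_gramSchmidtNormed_eq_one hu] at h
  nth_rw 1 [hv] at h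
  rw [inner_add_left, sum_inner] at h
  simp only [real_inner_smul_left, hterm, sum_ite_eq', mem_univ, if_true,
    inner_gramSchmidtNormed_eq_norm] at h
  linarith

lemma coeff_add_gramDefect_eq {j : ι} (hji : j < i)
    (hv : gramSchmidtNormed ℝ a i = a i + ∑ l, U l i • a l) :
    U j i + gramDefect a j i = -∑ l, gramDefect a j l * U l i := by
  have h := inner_gramSchmidtNormed_eq_zero_of_lt (a := a) hji
  rw [hv, inner_add_right, inner_sum] at h
  simp only [real_inner_smul_right, inner_eq_gramDefect_add, mul_add, mul_ite, mul_one, mul_zero,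
    sum_add_distrib, sum_ite_eq, mem_univ, if_true, if_neg hji.ne] at h
  have hcomm : ∑ l, U l i * gramDefect a j l = ∑ l, gramDefect a j l * U l i :=
    sum_congr rfl fun l _ => mul_comm _ _
  linarith

lemma sum_sq_coeff_mul_le (hunit : ∀ i, ‖a i‖ = 1) (hρ : frob (gramDefect a) < 1 / 2)
    (hv : gramSchmidtNormed ℝ a i = a i + ∑ l, U l i • a l) :
    (∑ l, U l i ^ 2) * (1 - frob (gramDefect a)) ^ 2 ≤ frob (gramDefect a) ^ 2 := by
  set ρ := frob (gramDefect a)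
  set q := ‖gramSchmidt ℝ a i‖
  have hu := gramSchmidt_ne_zero_of_frob_lt hunit hρ i
  have hdist : ‖gramSchmidtNormed ℝ a i - a i‖ ^ 2 = 2 * (1 - q) := by
    rw [norm_sub_sq_real, norm_gramSchmidtNormed_eq_one hu, hunit i, real_inner_comm,
      inner_gramSchmidtNormed_eq_norm]
    ring
  have hcoeff := one_sub_frob_gramDefect_mul_sum_sq_le (a := a) univ (fun l => U l i)
  rw [← add_sub_cancel_left (a i) (∑ l, U l i • a l), ← hv, hdist] at hcoeff
  have hq := one_sub_norm_sq_gramSchmidt_mul_le hunit (hρ.le.trans (by norm_num)) i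
  have hq1 : q ≤ 1 := hunit i ▸ norm_gramSchmidt_le i
  have hq_sq : 1 - q ≤ 1 - q ^ 2 := by nlinarith [norm_nonneg (gramSchmidt ℝ a i)]
  calc (∑ l, U l i ^ 2) * (1 - ρ) ^ 2 = (1 - ρ) * (∑ l, U l i ^ 2) * (1 - ρ) := by ring
    _ ≤ 2 * (1 - q) * (1 - ρ) := by gcongr; linarith
    _ ≤ (1 - q ^ 2) * (2 * (1 - ρ)) := by nlinarith
    _ ≤ ρ ^ 2 := hq

theorem coeff_diag_le (hunit : ∀ i, ‖a i‖ = 1) (hρ : frob (gramDefect a) < 1 / 2)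
    (hU : ∀ l, i < l → U l i = 0) (hv : gramSchmidtNormed ℝ a i = a i + ∑ l, U l i • a l) :
    U i i ≤ frob (gramDefect a) ^ 2 / (4 * (1 - 2 * frob (gramDefect a))) := by
  set ρ := frob (gramDefect a)
  set q := ‖gramSchmidt ℝ a i‖
  have hρ0 : 0 ≤ ρ := frob_nonneg _
  have hu := gramSchmidt_ne_zero_of_frob_lt hunit hρ i
  have hinv := one_add_coeff_mul_norm_gramSchmidt hu hU hv
  have hq : (1 - q ^ 2) * (2 * (1 - ρ)) ≤ ρ ^ 2 :=
    one_sub_norm_sq_gramSchmidt_mul_le hunit (hρ.le.trans (by norm_num)) i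
  have hq1 : q ≤ 1 := hunit i ▸ norm_gramSchmidt_le i
  have hq0 : 0 < q := norm_pos_iff.2 hu
  have hU0 : 0 ≤ U i i := by nlinarith
  have hquad : 2 * q ^ 2 * U i i ≤ 1 - q ^ 2 := by nlinarith [sq_nonneg (1 - q)]
  rw [le_div_iff₀ (by linarith)]
  calc U i i * (4 * (1 - 2 * ρ)) ≤ U i i * (4 * (1 - ρ) * q ^ 2) :=
        mul_le_mul_of_nonneg_left (by nlinarith) hU0
    _ = 2 * (1 - ρ) * (2 * q ^ 2 * U i i) := by ring
    _ ≤ 2 * (1 - ρ) * (1 - q ^ 2) := by gcongr; linarith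
    _ ≤ ρ ^ 2 := by linarith

theorem abs_coeff_add_gramDefect_le (hunit : ∀ i, ‖a i‖ = 1) (hρ : frob (gramDefect a) < 1 / 2)
    (hv : gramSchmidtNormed ℝ a i = a i + ∑ l, U l i • a l) {j : ι} (hji : j < i) :
    |U j i + gramDefect a j i| ≤ frob (gramDefect a) ^ 2 / (1 - frob (gramDefect a)) := by
  set ρ := frob (gramDefect a)
  have hρ1 : 0 < 1 - ρ := by linarith
  have hcol : ∑ l, U l i ^ 2 ≤ ρ ^ 2 / (1 - ρ) ^ 2 :=
    (le_div_iff₀ (by positivity)).2 (sum_sq_coeff_mul_le hunit hρ hv)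
  rw [coeff_add_gramDefect_eq hji hv, abs_neg]
  refine abs_le_of_sq_le_sq ?_ (by positivity)
  calc (∑ l, gramDefect a j l * U l i) ^ 2 ≤ ρ ^ 2 * ∑ l, U l i ^ 2 :=
        sq_sum_mul_le_frob_sq_mul _ j _
    _ ≤ ρ ^ 2 * (ρ ^ 2 / (1 - ρ) ^ 2) := by gcongr
    _ = (ρ ^ 2 / (1 - ρ)) ^ 2 := by rw [div_pow]; ring

end Perturbation

/-- Let Ā = [ā1,…,ā_d] have unit-norm columns, R̄ = ĀᵀĀ − I, and let V be the
Gram–Schmidt orthonormalization of Ā, written V − Ā = Ā Ū with Ū upper triangular.  Then as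
R̄ → 0, the diagonal entries satisfy lim sup ū_{ii}/‖R̄‖_F² ≤ 1/4 and the strictly upper
entries satisfy (ū_{ji} + r̄_{ji})/‖R̄‖_F → 0, i.e. for every ε > 0 there is η > 0 such that
whenever 0 < ‖R̄‖_F < η one has ū_{ii} ≤ (1/4 + ε)‖R̄‖_F² and |ū_{ji} + r̄_{ji}| ≤ ε‖R̄‖_F. -/
theorem gram_schmidt_perturbation {n d : ℕ} :
    ∀ ε > (0:ℝ), ∃ η > (0:ℝ),
      ∀ (abar : Fin d → EuclideanSpace ℝ (Fin n)), (∀ i, ‖abar i‖ = 1) →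
      ∀ (Rbar : Matrix (Fin d) (Fin d) ℝ),
        (∀ j i, Rbar j i = (inner ℝ (abar j) (abar i) : ℝ) - if j = i then 1 else 0) →
        0 < frob Rbar → frob Rbar < η →
      ∀ (Ubar : Matrix (Fin d) (Fin d) ℝ),
        (∀ i j : Fin d, j < i → Ubar i j = 0) →
        (∀ i, gsNormed abar i = abar i + ∑ j, Ubar j i • abar j) →
        (∀ i, Ubar i i ≤ (1/4 + ε) * (frob Rbar)^2) ∧
        (∀ j i : Fin d, j < i → |Ubar j i + Rbar j i| ≤ ε * frob Rbar) := by
  intro ε hε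
  refine ⟨ε / (1 + 4 * ε), by positivity, ?_⟩
  intro abar hunit Rbar hR _ hη Ubar hU hv
  obtain rfl : Rbar = gramDefect abar := Matrix.ext hR
  have hρ0 : 0 ≤ frob (gramDefect abar) := frob_nonneg _
  have hρε : frob (gramDefect abar) * (1 + 4 * ε) < ε := (lt_div_iff₀ (by positivity)).1 hη
  have hρ : frob (gramDefect abar) < 1 / 2 := by nlinarith
  refine ⟨fun i => (coeff_diag_le hunit hρ (fun l hl => hU l i hl) (hv i)).trans ?_,
    fun j i hji => (abs_coeff_add_gramDefect_le hunit hρ (hv i) hji).trans ?_⟩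
  · rw [div_le_iff₀ (by linarith)]
    nlinarith [sq_nonneg (frob (gramDefect abar))]
  · rw [div_le_iff₀ (by linarith)]
    nlinarith
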